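/- arXiv:2012.15237 — 2 statements merged into one kernel-verified Lean document; each statement's English description precedes it below -/
import Mathlib

section
/- Let S(y,y') = |q(y)-q(y')| for an arclength-parametrized planar curve q. If |⟨d_y q(y), ρ(y,y')⟩| ≤ 1/C and |⟨d_{y'} q(y'), ρ(y,y')⟩| ≤ 1/C for some C > 1 (transversality at both endpoints), and |q(y)-q(y')| ≤ L, then |∂_y ∂_{y'} S(y,y')| ≥ (1 - 1/C²)/L > 0. -/
/-!
Differentiating `S` in `y'` and then in `y` gives
`∂_y ∂_{y'} S = -(⟪q' y, q' y'⟫ - ⟪q' y, ρ⟫ ⟪q' y', ρ⟫) / S`.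
In the plane, with `ρ^⊥` the unit normal to the chord, the numerator is `⟪q' y, ρ^⊥⟫ ⟪q' y', ρ^⊥⟫`,
and `⟪u, ρ^⊥⟫² = 1 - ⟪u, ρ⟫² ≥ 1 - 1/C²` for each unit tangent `u`, so `|∂_y ∂_{y'} S| ≥ (1 - 1/C²)/S`.
-/

open scoped RealInnerProductSpace
open Module Filter Topology

section Calculus

variable {F : Type*} [NormedAddCommGroup F] [InnerProductSpace ℝ F]

theorem HasDerivAt.norm {f : ℝ → F} {f' : F} {x : ℝ} (hf : HasDerivAt f f' x) (hx : f x ≠ 0) :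
    HasDerivAt (fun t => ‖f t‖) (⟪f x, f'⟫ / ‖f x‖) x := by
  have h := hf.norm_sq.sqrt (pow_ne_zero 2 (norm_ne_zero_iff.mpr hx))
  simp only [Real.sqrt_sq (norm_nonneg _)] at h
  convert h using 1
  ring

theorem deriv_norm_sub_right {q : ℝ → F} {a b : ℝ} (hq : DifferentiableAt ℝ q b)
    (hab : q a ≠ q b) :
    deriv (fun b => ‖q a - q b‖) b = -⟪q a - q b, deriv q b⟫ / ‖q a - q b‖ := by
  have h : HasDerivAt (fun b => q a - q b) (-deriv q b) b := hq.hasDerivAt.const_sub (q a)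
  rw [(h.norm (sub_ne_zero.mpr hab)).deriv, inner_neg_right]

theorem hasDerivAt_deriv_norm_sub {q : ℝ → F} (hq : Differentiable ℝ q) {y y' : ℝ}
    (hne : q y ≠ q y') :
    HasDerivAt (fun a => deriv (fun b => ‖q a - q b‖) y')
      (-(⟪deriv q y, deriv q y'⟫
          - ⟪deriv q y, ‖q y - q y'‖⁻¹ • (q y - q y')⟫ * ⟪deriv q y', ‖q y - q y'‖⁻¹ • (q y - q y')⟫)
        / ‖q y - q y'‖) y := by
  set u := deriv q y
  set v := deriv q y'
  have hS : ‖q y - q y'‖ ≠ 0 := norm_ne_zero_iff.mpr (sub_ne_zero.mpr hne)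
  have hd : HasDerivAt (fun a => q a - q y') u y := (hq y).hasDerivAt.sub_const _
  have hnum : HasDerivAt (fun a => -⟪q a - q y', v⟫) (-⟪u, v⟫) y := by
    have h := (hd.inner ℝ (hasDerivAt_const y v)).neg
    simp only [inner_zero_right, zero_add] at h
    exact h
  have hev : (fun a => deriv (fun b => ‖q a - q b‖) y') =ᶠ[𝓝 y]
      fun a => -⟪q a - q y', v⟫ / ‖q a - q y'‖ := by
    filter_upwards [(hq y).continuousAt.eventually_ne hne] with a ha
    exact deriv_norm_sub_right (hq y') ha
  refine ((hnum.div (hd.norm (sub_ne_zero.mpr hne)) hS).congr_of_eventuallyEq hev).congr_deriv ?_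
  simp only [real_inner_smul_right, real_inner_comm (q y - q y')]
  field_simp
  ring

end Calculus

section Planar

variable {E : Type*} [NormedAddCommGroup E] [InnerProductSpace ℝ E]

/-- Both sides equal `(ω r u * ω r v) ^ 2`, for `ω` the area form of any orientation of `E`. -/
theorem sq_inner_sub_inner_mul_inner_of_finrank_eq_two (hE : finrank ℝ E = 2) {r : E}
    (hr : ‖r‖ = 1) (u v : E) :
    (⟪u, v⟫ - ⟪u, r⟫ * ⟪v, r⟫) ^ 2 = (‖u‖ ^ 2 - ⟪u, r⟫ ^ 2) * (‖v‖ ^ 2 - ⟪v, r⟫ ^ 2) := by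
  have : Fact (finrank ℝ E = 2) := ⟨hE⟩
  have : FiniteDimensional ℝ E := .of_fact_finrank_eq_two
  let o : Orientation ℝ E (Fin 2) := (finBasisOfFinrankEq ℝ E hE).orientation
  have huv := o.inner_mul_inner_add_areaForm_mul_areaForm r u v
  have hu := o.inner_sq_add_areaForm_sq r u
  have hv := o.inner_sq_add_areaForm_sq r v
  rw [hr] at huv hu hv
  rw [real_inner_comm r u, real_inner_comm r v]
  have hperp : ⟪u, v⟫ - ⟪r, u⟫ * ⟪r, v⟫ = o.areaForm r u * o.areaForm r v := by
    linear_combination -huv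
  rw [hperp, mul_pow]
  congr 1 <;> linarith

theorem one_sub_sq_le_abs_inner_sub_inner_mul_inner (hE : finrank ℝ E = 2) {u v r : E}
    (hu : ‖u‖ = 1) (hv : ‖v‖ = 1) (hr : ‖r‖ = 1) {c : ℝ} (hur : |⟪u, r⟫| ≤ c)
    (hvr : |⟪v, r⟫| ≤ c) :
    1 - c ^ 2 ≤ |⟪u, v⟫ - ⟪u, r⟫ * ⟪v, r⟫| := by
  rcases le_or_gt (1 - c ^ 2) 0 with hc | hc
  · exact hc.trans (abs_nonneg _)
  have hur2 : ⟪u, r⟫ ^ 2 ≤ c ^ 2 := sq_abs ⟪u, r⟫ ▸ pow_le_pow_left₀ (abs_nonneg _) hur 2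
  have hvr2 : ⟪v, r⟫ ^ 2 ≤ c ^ 2 := sq_abs ⟪v, r⟫ ▸ pow_le_pow_left₀ (abs_nonneg _) hvr 2
  have hsq : (1 - c ^ 2) ^ 2 ≤ (⟪u, v⟫ - ⟪u, r⟫ * ⟪v, r⟫) ^ 2 := by
    rw [sq_inner_sub_inner_mul_inner_of_finrank_eq_two hE hr, hu, hv, one_pow, sq]
    exact mul_le_mul (by linarith) (by linarith) hc.le (by linarith)
  exact abs_of_pos hc ▸ sq_le_sq.mp hsq

end Planar

theorem stmt1_general (q : ℝ → EuclideanSpace ℝ (Fin 2))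
    (hq : ContDiff ℝ 2 q) (harc : ∀ y, ‖deriv q y‖ = 1)
    (C L : ℝ)
    (y y' : ℝ) (hne : q y ≠ q y')
    (hlen : ‖q y - q y'‖ ≤ L)
    (htr : |⟪deriv q y, (‖q y - q y'‖)⁻¹ • (q y - q y')⟫| ≤ 1 / C)
    (htr' : |⟪deriv q y', (‖q y - q y'‖)⁻¹ • (q y - q y')⟫| ≤ 1 / C) :
    (1 - 1 / C ^ 2) / L ≤ |deriv (fun a => deriv (fun b => ‖q a - q b‖) y') y| := by
  have hS : 0 < ‖q y - q y'‖ := norm_pos_iff.mpr (sub_ne_zero.mpr hne)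
  have hρ : ‖‖q y - q y'‖⁻¹ • (q y - q y')‖ = 1 := norm_smul_inv_norm (sub_ne_zero.mpr hne)
  have key := one_sub_sq_le_abs_inner_sub_inner_mul_inner finrank_euclideanSpace_fin
    (harc y) (harc y') hρ htr htr'
  rw [div_pow, one_pow] at key
  rw [(hasDerivAt_deriv_norm_sub (hq.differentiable (by norm_num)) hne).deriv, neg_div, abs_neg,
    abs_div, abs_of_pos hS]
  rcases le_or_gt 0 (1 - 1 / C ^ 2) with hC | hC
  · calc (1 - 1 / C ^ 2) / L ≤ (1 - 1 / C ^ 2) / ‖q y - q y'‖ := by gcongr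
      _ ≤ _ := by gcongr
  · exact (div_nonpos_of_nonpos_of_nonneg hC.le (hS.le.trans hlen)).trans (by positivity)

/-- If an arclength-parametrized planar curve is uniformly transversal to the chord
direction ρ at both endpoints (inner products at most 1/C, C > 1) and the chord has
length at most L, then the mixed second derivative of S(y,y') = ‖q y - q y'‖ is
bounded below by (1 - 1/C²)/L. -/
theorem stmt1 (q : ℝ → EuclideanSpace ℝ (Fin 2))
    (hq : ContDiff ℝ 2 q) (harc : ∀ y, ‖deriv q y‖ = 1)
    (C L : ℝ) (hC : 1 < C) (hL : 0 < L)
    (y y' : ℝ) (hne : q y ≠ q y')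
    (hlen : ‖q y - q y'‖ ≤ L)
    (htr : |⟪deriv q y, (‖q y - q y'‖)⁻¹ • (q y - q y')⟫| ≤ 1 / C)
    (htr' : |⟪deriv q y', (‖q y - q y'‖)⁻¹ • (q y - q y')⟫| ≤ 1 / C) :
    (1 - 1 / C ^ 2) / L ≤ |deriv (fun a => deriv (fun b => ‖q a - q b‖) y') y| :=
  stmt1_general q hq harc C L y y' hne hlen htr htr'
end

section
/- With S(s,t) = √((s-t)² + α²(t-1)²) as above, there exist constants C₁, C₂ > 0 (depending on α and ε₀) such that whenever 0 ≤ s ≤ 1 - h^δ and |t-1| ≤ ε₀(1-s) with ε₀ < 1 sufficiently small, one has C₁·|t-1|·(1-s)/S(s,t)³ ≤ |∂_s ∂_t S(s,t)| ≤ C₂·|t-1|·(1-s)/S(s,t)³, and moreover S(s,t) is comparable to 1-s: (1-ε₀)(1-s) ≤ S(s,t) ≤ (1+α)(1-s)·(1+ε₀). -/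
noncomputable def S3 (α s t : ℝ) : ℝ := Real.sqrt ((s - t) ^ 2 + α ^ 2 * (t - 1) ^ 2)

open Topology

/-!
The mixed derivative is explicit: `∂_s ∂_t S = α² (t - 1) (1 - s) / S³`, so both bounds hold with
`C₁ = C₂ = α²`. The comparison `S ≍ 1 - s` follows from `|s - t| ≤ S ≤ |s - t| + α |t - 1|` and the
triangle inequality through the corner `1`, since `|t - 1| ≤ ε₀ (1 - s)`.
-/

section S3

variable {α s t : ℝ}

theorem S3_pos (hα : α ≠ 0) (hs : s ≠ 1) : 0 < S3 α s t := by
  refine Real.sqrt_pos.mpr ?_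
  by_cases ht : t = 1
  · subst ht
    have : s - 1 ≠ 0 := sub_ne_zero.mpr hs
    positivity
  · have : t - 1 ≠ 0 := sub_ne_zero.mpr ht
    positivity

theorem hasDerivAt_S3_fst (hS : 0 < S3 α s t) :
    HasDerivAt (fun s' => S3 α s' t) ((s - t) / S3 α s t) s := by
  have hq : HasDerivAt (fun s' : ℝ => (s' - t) ^ 2 + α ^ 2 * (t - 1) ^ 2) (2 * (s - t)) s := by
    simpa using (((hasDerivAt_id s).sub_const t).pow 2).add_const (α ^ 2 * (t - 1) ^ 2)
  refine (hq.sqrt (Real.sqrt_pos.mp hS).ne').congr_deriv ?_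
  change _ / (2 * S3 α s t) = _
  field_simp

theorem hasDerivAt_S3_snd (hS : 0 < S3 α s t) :
    HasDerivAt (S3 α s) ((α ^ 2 * (t - 1) - (s - t)) / S3 α s t) t := by
  have hq : HasDerivAt (fun t' : ℝ => (s - t') ^ 2 + α ^ 2 * (t' - 1) ^ 2)
      (2 * (s - t) ^ 1 * -1 + α ^ 2 * (2 * (t - 1) ^ 1 * 1)) t :=
    (((hasDerivAt_id t).const_sub s).pow 2).add
      ((((hasDerivAt_id t).sub_const 1).pow 2).const_mul (α ^ 2))
  refine (hq.sqrt (Real.sqrt_pos.mp hS).ne').congr_deriv ?_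
  change _ / (2 * S3 α s t) = _
  field_simp
  ring

theorem deriv_deriv_S3 (hS : 0 < S3 α s t) :
    deriv (fun s' => deriv (fun t' => S3 α s' t') t) s
      = α ^ 2 * (t - 1) * (1 - s) / S3 α s t ^ 3 := by
  have hcont : Continuous (fun s' => S3 α s' t) := by unfold S3; fun_prop
  have hnear : (fun s' => deriv (fun t' => S3 α s' t') t)
      =ᶠ[𝓝 s] fun s' => (α ^ 2 * (t - 1) - (s' - t)) / S3 α s' t := by
    filter_upwards [(isOpen_lt continuous_const hcont).mem_nhds hS] with s' hs'
    exact (hasDerivAt_S3_snd hs').deriv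
  have hquot : HasDerivAt (fun s' => (α ^ 2 * (t - 1) - (s' - t)) / S3 α s' t)
      ((-1 * S3 α s t - (α ^ 2 * (t - 1) - (s - t)) * ((s - t) / S3 α s t)) / S3 α s t ^ 2) s :=
    ((hasDerivAt_id s).sub_const t |>.const_sub _ |>.congr_deriv (by simp)).div
      (hasDerivAt_S3_fst hS) hS.ne'
  rw [hnear.deriv_eq, hquot.deriv]
  have hsq : S3 α s t ^ 2 = (s - t) ^ 2 + α ^ 2 * (t - 1) ^ 2 :=
    Real.sq_sqrt (by positivity)
  field_simp
  linear_combination (-1) * hsq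

theorem abs_sub_le_S3 : |s - t| ≤ S3 α s t := by
  rw [← Real.sqrt_sq_eq_abs]
  exact Real.sqrt_le_sqrt (by nlinarith)

theorem S3_le_abs_add (hα : 0 ≤ α) : S3 α s t ≤ |s - t| + α * |t - 1| := by
  refine Real.sqrt_le_iff.mpr ⟨by positivity, ?_⟩
  nlinarith [sq_abs (s - t), sq_abs (t - 1),
    mul_nonneg (mul_nonneg hα (abs_nonneg (s - t))) (abs_nonneg (t - 1))]

variable {ε₀ : ℝ}

theorem one_sub_mul_le_S3 (ht : |t - 1| ≤ ε₀ * (1 - s)) : (1 - ε₀) * (1 - s) ≤ S3 α s t := by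
  have hcorner : 1 - s ≤ |s - t| + |t - 1| := by linarith [neg_le_abs (s - t), neg_le_abs (t - 1)]
  linarith [abs_sub_le_S3 (α := α) (s := s) (t := t)]

theorem S3_le_mul (hα : 0 ≤ α) (hs : s ≤ 1) (ht : |t - 1| ≤ ε₀ * (1 - s)) :
    S3 α s t ≤ (1 + α) * (1 - s) * (1 + ε₀) := by
  have hcorner : |s - t| ≤ (1 - s) + |t - 1| := by
    have := abs_sub_le s 1 t
    rwa [abs_of_nonpos (by linarith : s - 1 ≤ 0), neg_sub, abs_sub_comm 1 t] at this
  have hαt : α * |t - 1| ≤ α * (ε₀ * (1 - s)) := mul_le_mul_of_nonneg_left ht hα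
  nlinarith [S3_le_abs_add (s := s) (t := t) hα, mul_nonneg hα (sub_nonneg.mpr hs)]

end S3

theorem stmt3_general (α ε₀ : ℝ) (hα : 0 < α) :
    ∃ C₁ C₂ : ℝ, 0 < C₁ ∧ 0 < C₂ ∧
      ∀ h δ s t : ℝ, 0 < h → h < 1 → 0 < δ → 0 ≤ s → s ≤ 1 - h ^ δ →
        |t - 1| ≤ ε₀ * (1 - s) →
        (C₁ * |t - 1| * (1 - s) / (S3 α s t) ^ 3 ≤
            |deriv (fun s' => deriv (fun t' => S3 α s' t') t) s| ∧
          |deriv (fun s' => deriv (fun t' => S3 α s' t') t) s| ≤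
            C₂ * |t - 1| * (1 - s) / (S3 α s t) ^ 3) ∧
        ((1 - ε₀) * (1 - s) ≤ S3 α s t ∧ S3 α s t ≤ (1 + α) * (1 - s) * (1 + ε₀)) := by
  refine ⟨α ^ 2, α ^ 2, by positivity, by positivity, ?_⟩
  intro h δ s t hh _ _ _ hs ht
  have hs1 : s < 1 := by linarith [Real.rpow_pos_of_pos hh δ]
  have hS : 0 < S3 α s t := S3_pos hα.ne' hs1.ne
  have hd : |deriv (fun s' => deriv (fun t' => S3 α s' t') t) s|
      = α ^ 2 * |t - 1| * (1 - s) / S3 α s t ^ 3 := by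
    rw [deriv_deriv_S3 hS, abs_div, abs_mul, abs_mul, abs_of_nonneg (sq_nonneg α),
      abs_of_pos (sub_pos.mpr hs1), abs_of_pos (pow_pos hS 3)]
  exact ⟨⟨hd.ge, hd.le⟩, one_sub_mul_le_S3 ht, S3_le_mul hα.le hs1.le ht⟩

/-- Two-sided comparison for |∂_s ∂_t S| on the near-glancing region
{0 ≤ s ≤ 1 - h^δ, |t-1| ≤ ε₀(1-s)}, together with S ≍ 1-s. -/
theorem stmt3 (α ε₀ : ℝ) (hα : 0 < α) (hε : 0 < ε₀) (hεlt : ε₀ < min 1 (1 / (2 * α))) :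
    ∃ C₁ C₂ : ℝ, 0 < C₁ ∧ 0 < C₂ ∧
      ∀ h δ s t : ℝ, 0 < h → h < 1 → 0 < δ → 0 ≤ s → s ≤ 1 - h ^ δ →
        |t - 1| ≤ ε₀ * (1 - s) →
        (C₁ * |t - 1| * (1 - s) / (S3 α s t) ^ 3 ≤
            |deriv (fun s' => deriv (fun t' => S3 α s' t') t) s| ∧
          |deriv (fun s' => deriv (fun t' => S3 α s' t') t) s| ≤
            C₂ * |t - 1| * (1 - s) / (S3 α s t) ^ 3) ∧
        ((1 - ε₀) * (1 - s) ≤ S3 α s t ∧ S3 α s t ≤ (1 + α) * (1 - s) * (1 + ε₀)) :=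
  stmt3_general α ε₀ hα
end
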